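/- arXiv:1708.04793 — 3 statements merged into one kernel-verified Lean document; each statement's English description precedes it below -/
import Mathlib

section
/- Let n be odd, n ≥ 3. There are exactly 2n functions f : ZMod n → Bool achieving exactly n - 1 anticorrelated adjacent pairs (i.e., |{i : f(i) ≠ f(i+1)}| = n - 1). -/
open Finset

private def Fn (n : ℕ) [NeZero n] (j : ZMod n) (b : Bool) : ZMod n → Bool :=
  fun i => xor b (decide (Odd ((i - j - 1).val)))

private lemma val_sub_one {n : ℕ} [NeZero n] (d : ZMod n) (hd : d ≠ 0) :
    (d - 1).val = d.val - 1 := by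
  have h1 : 1 ≤ d.val := Nat.one_le_iff_ne_zero.mpr (by
    simpa [ZMod.val_eq_zero] using hd)
  have : (d - 1) = ((d.val - 1 : ℕ) : ZMod n) := by
    have hc : ((d.val : ℕ) : ZMod n) = d := by simp [ZMod.natCast_val, ZMod.cast_id]
    rw [Nat.cast_sub h1, hc]; norm_num
  rw [this, ZMod.val_cast_of_lt]
  exact lt_of_le_of_lt (Nat.sub_le _ _) d.val_lt

private lemma agree_iff (n : ℕ) [NeZero n] (hn : Odd n) (j : ZMod n) (b : Bool)
    (i : ZMod n) : (Fn n j b i = Fn n j b (i + 1)) ↔ i = j := by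
  have hnpos : 0 < n := Nat.pos_of_ne_zero (NeZero.ne n)
  by_cases h : i = j
  · subst h
    simp only [iff_true]
    have e1 : i + 1 - i - 1 = (0 : ZMod n) := by ring
    have e2 : i - i - 1 = (-1 : ZMod n) := by ring
    have e3 : (-1 : ZMod n) = ((n - 1 : ℕ) : ZMod n) := by
      rw [Nat.cast_sub (by omega : 1 ≤ n), ZMod.natCast_self]
      ring
    have e4 : ((n - 1 : ℕ) : ZMod n).val = n - 1 :=
      ZMod.val_cast_of_lt (by omega)
    have hev : ¬ Odd (n - 1) := by
      simp only [Nat.not_odd_iff_even]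
      exact Nat.Odd.sub_odd hn odd_one
    simp [Fn, e1, e2, e3, e4, hev]
  · simp only [h, iff_false]
    set d := i - j with hdd
    have hd : d ≠ 0 := sub_ne_zero.mpr h
    have e1 : i - j - 1 = d - 1 := rfl
    have e2 : i + 1 - j - 1 = d := by rw [hdd]; ring
    have h1 : 1 ≤ d.val := Nat.one_le_iff_ne_zero.mpr (by
      simpa [ZMod.val_eq_zero] using hd)
    have hv : (d - 1).val = d.val - 1 := val_sub_one d hd
    have hpar : ¬ (Odd (d.val - 1) ↔ Odd d.val) := by
      obtain ⟨m, hm⟩ := Nat.exists_eq_add_of_le h1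
      have hmm : 1 + m - 1 = m := by omega
      rw [hm, hmm, Nat.odd_iff, Nat.odd_iff]
      omega
    simp only [Fn, e1, e2, hv]
    cases b <;> simp [decide_eq_decide] <;> tauto

private lemma count_Fn (n : ℕ) [NeZero n] (hn : Odd n) (j : ZMod n) (b : Bool) :
    (univ.filter (fun i : ZMod n => Fn n j b i ≠ Fn n j b (i + 1))).card = n - 1 := by
  have : (univ.filter (fun i : ZMod n => Fn n j b i ≠ Fn n j b (i + 1)))
      = univ.erase j := by
    ext i
    simp only [Finset.mem_filter, mem_univ, true_and, Finset.mem_erase, and_true]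
    rw [ne_eq, agree_iff n hn j b i]
  rw [this, Finset.card_erase_of_mem (mem_univ j), Finset.card_univ, ZMod.card]

private lemma surj (n : ℕ) [NeZero n] (hn : Odd n) (h3 : 3 ≤ n) (f : ZMod n → Bool)
    (hf : (univ.filter (fun i : ZMod n => f i ≠ f (i + 1))).card = n - 1) :
    ∃ j b, Fn n j b = f := by
  have hcardA : (univ.filter (fun i : ZMod n => f i = f (i + 1))).card = 1 := by
    have hsum := Finset.card_filter_add_card_filter_not
      (s := (univ : Finset (ZMod n))) (p := fun i => f i ≠ f (i + 1))
    have he : (univ.filter (fun i : ZMod n => ¬ (f i ≠ f (i + 1))))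
        = (univ.filter (fun i : ZMod n => f i = f (i + 1))) := by
      simp
    rw [he, hf, Finset.card_univ, ZMod.card] at hsum
    omega
  obtain ⟨j, hj⟩ := Finset.card_eq_one.mp hcardA
  have hne : ∀ i : ZMod n, i ≠ j → f (i + 1) = ! f i := by
    intro i hi
    have : i ∉ univ.filter (fun i : ZMod n => f i = f (i + 1)) := by
      rw [hj]; simpa using hi
    simp only [Finset.mem_filter, mem_univ, true_and] at this
    cases hfi : f i <;> cases hfi1 : f (i + 1) <;> simp_all
  refine ⟨j, f (j + 1), ?_⟩
  have main : ∀ k, k < n → f (j + 1 + (k : ZMod n)) = xor (f (j + 1)) (decide (Odd k)) := by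
    intro k
    induction k with
    | zero => intro _; simp
    | succ k ih =>
      intro hk1
      have hk : k < n := Nat.lt_of_succ_lt hk1
      have ihk := ih hk
      have hne0 : j + 1 + (k : ZMod n) ≠ j := by
        intro hcontra
        have hz : ((k + 1 : ℕ) : ZMod n) = 0 := by
          push_cast
          linear_combination hcontra
        rw [ZMod.natCast_eq_zero_iff] at hz
        have := Nat.le_of_dvd (Nat.succ_pos k) hz
        omega
      have hstep := hne _ hne0
      have e : j + 1 + ((k + 1 : ℕ) : ZMod n) = (j + 1 + (k : ZMod n)) + 1 := by
        push_cast; ring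
      rw [e, hstep, ihk]
      have : decide (Odd (k + 1)) = ! decide (Odd k) := by
        simp [Nat.odd_add_one, ← Nat.not_odd_iff_even]
      rw [this]
      cases f (j + 1) <;> cases decide (Odd k) <;> rfl
  funext i
  set k := (i - j - 1).val with hk
  have hkc : ((k : ℕ) : ZMod n) = i - j - 1 := by
    simp [hk, ZMod.natCast_val, ZMod.cast_id]
  have hi : i = j + 1 + (k : ZMod n) := by rw [hkc]; ring
  have := main k (ZMod.val_lt _)
  rw [← hi] at this
  simp only [Fn]
  rw [this]

theorem stmt_2 (n : ℕ) (hn : Odd n) (h3 : 3 ≤ n) [NeZero n] :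
    (Finset.univ.filter (fun f : ZMod n → Bool =>
      (Finset.univ.filter (fun i : ZMod n => f i ≠ f (i + 1))).card = n - 1)).card
      = 2 * n := by
  have hset : (Finset.univ.filter (fun f : ZMod n → Bool =>
      (Finset.univ.filter (fun i : ZMod n => f i ≠ f (i + 1))).card = n - 1))
      = (univ : Finset (ZMod n × Bool)).image (fun p => Fn n p.1 p.2) := by
    ext f
    simp only [Finset.mem_filter, mem_univ, true_and, Finset.mem_image, Prod.exists]
    constructor
    · intro hf
      obtain ⟨j, b, hjb⟩ := surj n hn h3 f hf
      exact ⟨j, b, hjb⟩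
    · rintro ⟨j, b, -, rfl⟩
      exact count_Fn n hn j b
  rw [hset, Finset.card_image_of_injective _ ?inj, Finset.card_univ]
  · simp [ZMod.card, Nat.mul_comm]
  case inj =>
    rintro ⟨j, b⟩ ⟨j', b'⟩ h
    simp only at h
    have hj : j' = j := by
      have h1 : Fn n j b j' = Fn n j b (j' + 1) := by
        rw [h]; exact (agree_iff n hn j' b' j').mpr rfl
      exact (agree_iff n hn j b j').mp h1
    rw [hj] at h
    have hb : b = b' := by
      have hc := congrFun h (j + 1)
      simpa [Fn, show j + 1 - j - 1 = (0 : ZMod n) by ring] using hc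
    simp [Prod.ext_iff, hj, hb]
end

section
/- Let n ≥ 5 be odd, let θ satisfy cos²θ = cos(π/n)/(1 + cos(π/n)), and define unit vectors l_i = (sin θ · cos φ_i, sin θ · sin φ_i, cos θ) in ℝ³ with φ_i = (n−1)π·i/n for i ∈ ZMod n. Then for every i, the vectors l_i and l_{i+1} are orthogonal: ⟪l_i, l_{i+1}⟫ = 0. -/
open Real

theorem stmt_10 (n : ℕ) (hn : Odd n) (h5 : 5 ≤ n) [NeZero n]
    (θ : ℝ) (hθ : Real.cos θ ^ 2 = Real.cos (π / n) / (1 + Real.cos (π / n)))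
    (φ : ZMod n → ℝ) (hφ : ∀ i : ZMod n, φ i = ((n : ℝ) - 1) * π * (i.val : ℝ) / n)
    (l : ZMod n → ℝ × ℝ × ℝ)
    (hl : ∀ i : ZMod n,
      l i = (Real.sin θ * Real.cos (φ i), Real.sin θ * Real.sin (φ i), Real.cos θ)) :
    ∀ i : ZMod n,
      (l i).1 * (l (i + 1)).1 + (l i).2.1 * (l (i + 1)).2.1 + (l i).2.2 * (l (i + 1)).2.2
        = 0 := by
  intro i
  have hn0 : (n : ℝ) ≠ 0 := by
    have : 0 < n := Nat.lt_of_lt_of_le (by norm_num) h5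
    exact_mod_cast this.ne'
  have hcos1 : Real.cos (((n : ℝ) - 1) * π / n) = - Real.cos (π / n) := by
    have h1 : ((n : ℝ) - 1) * π / n = π - π / n := by field_simp
    rw [h1, Real.cos_pi_sub]
  have hval : (i + 1).val = (i.val + 1) % n := by
    have h1 : (1 : ZMod n).val = 1 := by
      rw [ZMod.val_one_eq_one_mod]; exact Nat.mod_eq_of_lt (by omega)
    rw [ZMod.val_add, h1]
  have hkey : Real.cos (φ i - φ (i + 1)) = - Real.cos (π / n) := by
    by_cases h : i.val = n - 1
    · have h0 : (i + 1).val = 0 := by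
        rw [hval, h, Nat.sub_add_cancel (by omega), Nat.mod_self]
      have hA : φ i - φ (i + 1) = ((n : ℝ) - 1) * π - ((n : ℝ) - 1) * π / n := by
        rw [hφ, hφ, h0, h]
        have : ((n - 1 : ℕ) : ℝ) = (n : ℝ) - 1 := by
          have : (1:ℕ) ≤ n := by omega
          push_cast [this]; ring
        rw [this]
        field_simp
        ring
      rw [hA]
      have hcast : ((n : ℝ) - 1) = ((n - 1 : ℕ) : ℝ) := by
        have : (1:ℕ) ≤ n := by omega
        push_cast [this]; ring
      rw [hcast, Real.cos_nat_mul_pi_sub]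
      have heven : Even (n - 1) := Nat.Odd.sub_odd hn odd_one
      rw [heven.neg_one_pow, ← hcast, hcos1]
      ring
    · have h1 : (i + 1).val = i.val + 1 := by
        rw [hval]
        have : i.val < n := i.val_lt
        exact Nat.mod_eq_of_lt (by omega)
      have hA : φ i - φ (i + 1) = -(((n : ℝ) - 1) * π / n) := by
        rw [hφ, hφ, h1]
        push_cast
        field_simp
        ring
      rw [hA, Real.cos_neg, hcos1]
  have hc : 0 < Real.cos (π / n) := by
    apply Real.cos_pos_of_mem_Ioo
    constructor
    · have : 0 < π / n := by positivity
      linarith [Real.pi_pos]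
    · have h2 : π / n ≤ π / 5 := by
        apply div_le_div_of_nonneg_left Real.pi_pos.le (by norm_num)
        exact_mod_cast h5
      have : π / 5 < π / 2 := by
        apply div_lt_div_of_pos_left Real.pi_pos <;> norm_num
      linarith
  have hc1 : 1 + Real.cos (π / n) ≠ 0 := by linarith
  have hs : Real.sin θ ^ 2 = 1 - Real.cos θ ^ 2 := by
    have := Real.sin_sq_add_cos_sq θ
    linarith
  rw [hl i, hl (i + 1)]
  simp only
  have hexp : Real.sin θ * Real.cos (φ i) * (Real.sin θ * Real.cos (φ (i + 1))) +
      Real.sin θ * Real.sin (φ i) * (Real.sin θ * Real.sin (φ (i + 1))) +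
      Real.cos θ * Real.cos θ =
      Real.sin θ ^ 2 * Real.cos (φ i - φ (i + 1)) + Real.cos θ ^ 2 := by
    rw [Real.cos_sub]; ring
  rw [hexp, hkey, hs, hθ]
  field_simp
  ring
end

section
/- With the KCBS vectors l_i (n odd, n ≥ 5, cos²θ = cos(π/n)/(1+cos(π/n))) and the state ψ = (0,0,1), one has ⟪ψ, l_i⟫² = cos(π/n)/(1+cos(π/n)) for every i, and hence the probability of anticorrelation ⟪ψ, l_i⟫² + ⟪ψ, l_{i+1}⟫² equals 2cos(π/n)/(1+cos(π/n)). -/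
open Real

theorem stmt_11 (n : ℕ) (hn : Odd n) (h5 : 5 ≤ n) [NeZero n]
    (θ : ℝ) (hθ : Real.cos θ ^ 2 = Real.cos (π / n) / (1 + Real.cos (π / n)))
    (φ : ZMod n → ℝ) (hφ : ∀ i : ZMod n, φ i = ((n : ℝ) - 1) * π * (i.val : ℝ) / n)
    (l : ZMod n → ℝ × ℝ × ℝ)
    (hl : ∀ i : ZMod n,
      l i = (Real.sin θ * Real.cos (φ i), Real.sin θ * Real.sin (φ i), Real.cos θ))
    (ψ : ℝ × ℝ × ℝ) (hψ : ψ = (0, 0, 1)) :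
    (∀ i : ZMod n,
      (ψ.1 * (l i).1 + ψ.2.1 * (l i).2.1 + ψ.2.2 * (l i).2.2) ^ 2
        = Real.cos (π / n) / (1 + Real.cos (π / n))) ∧
    (∀ i : ZMod n,
      (ψ.1 * (l i).1 + ψ.2.1 * (l i).2.1 + ψ.2.2 * (l i).2.2) ^ 2
        + (ψ.1 * (l (i + 1)).1 + ψ.2.1 * (l (i + 1)).2.1 + ψ.2.2 * (l (i + 1)).2.2) ^ 2
        = 2 * Real.cos (π / n) / (1 + Real.cos (π / n))) := by
  have key : ∀ i : ZMod n,
      (ψ.1 * (l i).1 + ψ.2.1 * (l i).2.1 + ψ.2.2 * (l i).2.2) ^ 2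
        = Real.cos (π / n) / (1 + Real.cos (π / n)) := by
    intro i
    rw [hl i, hψ]
    simpa using hθ
  refine ⟨key, fun i => ?_⟩
  rw [key i, key (i + 1)]
  ring
end
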